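/- Let n ∈ 2ℕ₀ and k ≥ 1. Suppose n sign-change points are each assigned independently and uniformly to one of k bins. Then the probability that every bin contains an even number of sign-change points is at most P(n)/k^{n/2}, where P(n) is the number of partitions of an n-element set into unordered pairs; in particular this probability is at most C(n(n-1)/2, n/2)/√(k^n) and tends to 0 as k → ∞. -/
import Mathlib


open Filter

private lemma even_mono_pair {n k : ℕ} {m : Fin n → Fin k} (hm : Monotone m)
    (hev : ∀ v, Even ((Finset.univ.filter (fun i => m i = v)).card))
    (a b : Fin n) (hab : (a : ℕ) + 1 = (b : ℕ)) (hae : Even (a : ℕ)) : m a = m b := by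
  classical
  by_contra hne
  have hab' : a ≤ b := by rw [Fin.le_def]; omega
  have hlt : m a < m b := lt_of_le_of_ne (hm hab') hne
  have hSeq : Finset.univ.filter (fun i => m i ≤ m a) = Finset.Iic a := by
    ext i
    simp only [Finset.mem_filter, Finset.mem_univ, true_and, Finset.mem_Iic]
    constructor
    · intro hi
      by_contra hia
      have hbi : b ≤ i := by
        rw [Fin.le_def]
        rw [Fin.le_def] at hia
        omega
      exact absurd hlt (not_lt.mpr (le_trans (hm hbi) hi))
    · intro hi; exact hm hi
  have hodd : ¬ Even ((Finset.univ.filter (fun i => m i ≤ m a)).card) := by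
    rw [hSeq, Fin.card_Iic]
    simp [Nat.even_add_one, hae]
  apply hodd
  have hU : Finset.univ.filter (fun i => m i ≤ m a)
      = (Finset.Iic (m a)).biUnion (fun v => Finset.univ.filter (fun i => m i = v)) := by
    ext i
    simp only [Finset.mem_filter, Finset.mem_univ, true_and, Finset.mem_biUnion,
      Finset.mem_Iic]
    constructor
    · intro h; exact ⟨m i, h, rfl⟩
    · rintro ⟨v, hv, rfl⟩; exact hv
  rw [hU, Finset.card_biUnion (fun x _ y _ hxy => Finset.disjoint_left.mpr (by
    intro i hi hi'
    simp only [Finset.mem_filter, Finset.mem_univ, true_and] at hi hi'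
    exact hxy (hi.symm.trans hi')))]
  exact Finset.sum_induction _ Even (fun _ _ ha hb => ha.add hb) Even.zero
    (fun v _ => hev v)

private def sigA {n k : ℕ} (f : Fin n → Fin k) : Equiv.Perm (Fin n) :=
  Tuple.sort (fun i => toLex (f i, i))

private lemma sigA_mono {n k : ℕ} (f : Fin n → Fin k) :
    Monotone (fun i => f (sigA f i)) := by
  intro i i' hii
  have h := Tuple.monotone_sort (fun i => toLex (f i, i)) hii
  simp only [Function.comp_apply] at h
  rw [Prod.Lex.le_iff] at h
  rcases h with h | h
  · exact le_of_lt h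
  · exact le_of_eq h.1

private lemma fiber_card_sig {n k : ℕ} (f : Fin n → Fin k) (σ : Equiv.Perm (Fin n))
    (v : Fin k) :
    (Finset.univ.filter (fun i => f (σ i) = v)).card
      = (Finset.univ.filter (fun i => f i = v)).card := by
  apply Finset.card_bij (fun i _ => σ i)
  · intro a ha
    simp only [Finset.mem_filter, Finset.mem_univ, true_and] at ha ⊢
    exact ha
  · intro a _ b _ h
    exact σ.injective h
  · intro b hb
    simp only [Finset.mem_filter, Finset.mem_univ, true_and] at hb
    refine ⟨σ.symm b, ?_, σ.apply_symm_apply b⟩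
    simp only [Finset.mem_filter, Finset.mem_univ, true_and, σ.apply_symm_apply]
    exact hb

private def Pf {t k : ℕ} (f : Fin (t + t) → Fin k) : Finset (Finset (Fin (t + t))) :=
  Finset.image (fun j : Fin t =>
    ({sigA f ⟨2 * j.1, by have := j.2; omega⟩,
      sigA f ⟨2 * j.1 + 1, by have := j.2; omega⟩} : Finset (Fin (t + t)))) Finset.univ

private lemma Pf_pair_eq {t k : ℕ} {f : Fin (t + t) → Fin k}
    (hf : ∀ v : Fin k, Even ((Finset.univ.filter (fun i => f i = v)).card)) (j : Fin t) :
    f (sigA f ⟨2 * j.1, by have := j.2; omega⟩)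
      = f (sigA f ⟨2 * j.1 + 1, by have := j.2; omega⟩) := by
  exact even_mono_pair (sigA_mono f) (fun v => by rw [fiber_card_sig]; exact hf v)
    _ _ rfl (even_two_mul _)

private lemma Pf_card2 {t k : ℕ} (f : Fin (t + t) → Fin k) :
    ∀ p ∈ Pf f, p.card = 2 := by
  intro p hp
  rw [Pf, Finset.mem_image] at hp
  obtain ⟨j, _, rfl⟩ := hp
  rw [Finset.card_pair]
  intro h
  have := (sigA f).injective h
  simp only [Fin.mk.injEq] at this
  omega

private lemma Pf_disj {t k : ℕ} (f : Fin (t + t) → Fin k) :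
    ((Pf f : Set (Finset (Fin (t + t))))).PairwiseDisjoint id := by
  intro p hp q hq hne
  simp only [Finset.mem_coe, Pf, Finset.mem_image] at hp hq
  obtain ⟨j, _, rfl⟩ := hp
  obtain ⟨j', _, rfl⟩ := hq
  have hjj : j ≠ j' := by rintro rfl; exact hne rfl
  refine Finset.disjoint_left.mpr ?_
  intro x hx hx'
  simp only [id_eq, Finset.mem_insert, Finset.mem_singleton] at hx hx'
  have hval : ∀ (a b : Fin (t + t)), sigA f a = sigA f b → (a : ℕ) = (b : ℕ) := by
    intro a b h
    have := (sigA f).injective h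
    exact congrArg Fin.val this
  have hjv : (j : ℕ) ≠ (j' : ℕ) := fun h => hjj (Fin.ext h)
  rcases hx with rfl | rfl <;> rcases hx' with h | h <;>
    · have := hval _ _ h
      simp only at this
      omega

private lemma Pf_sup {t k : ℕ} (f : Fin (t + t) → Fin k) :
    (Pf f).sup id = Finset.univ := by
  apply Finset.eq_univ_of_forall
  intro x
  rw [Finset.mem_sup]
  obtain ⟨a, rfl⟩ : ∃ a, sigA f a = x :=
    ⟨(sigA f).symm x, (sigA f).apply_symm_apply x⟩
  have hat : (a : ℕ) < t + t := a.2
  refine ⟨{sigA f ⟨2 * ((a : ℕ) / 2), by omega⟩,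
    sigA f ⟨2 * ((a : ℕ) / 2) + 1, by omega⟩}, ?_, ?_⟩
  · rw [Pf, Finset.mem_image]
    exact ⟨⟨(a : ℕ) / 2, by omega⟩, Finset.mem_univ _, rfl⟩
  · simp only [id_eq, Finset.mem_insert, Finset.mem_singleton]
    rcases Nat.even_or_odd (a : ℕ) with he | ho
    · left
      exact congrArg (sigA f) (Fin.ext (by
        simp only
        obtain ⟨c, hc⟩ := he
        omega)) |>.symm
    · right
      exact congrArg (sigA f) (Fin.ext (by
        simp only
        obtain ⟨c, hc⟩ := ho
        omega)) |>.symm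

private lemma Pf_const {t k : ℕ} {f : Fin (t + t) → Fin k}
    (hf : ∀ v : Fin k, Even ((Finset.univ.filter (fun i => f i = v)).card)) :
    ∀ p ∈ Pf f, ∀ x ∈ p, ∀ y ∈ p, f x = f y := by
  intro p hp x hx y hy
  rw [Pf, Finset.mem_image] at hp
  obtain ⟨j, _, rfl⟩ := hp
  have hpair := Pf_pair_eq hf j
  simp only [Finset.mem_insert, Finset.mem_singleton] at hx hy
  rcases hx with rfl | rfl <;> rcases hy with rfl | rfl
  · rfl
  · exact hpair
  · exact hpair.symm
  · rfl

private lemma key_count (t k : ℕ) (hk : 1 ≤ k) :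
    {f : Fin (t + t) → Fin k |
        ∀ j : Fin k, Even ((Finset.univ.filter (fun i => f i = j)).card)}.ncard
      ≤ {P : Finset (Finset (Fin (t + t))) |
          (∀ p ∈ P, p.card = 2) ∧
          (P : Set (Finset (Fin (t + t)))).PairwiseDisjoint id ∧
          P.sup id = Finset.univ}.ncard * k ^ t := by
  classical
  set G := {f : Fin (t + t) → Fin k |
      ∀ j : Fin k, Even ((Finset.univ.filter (fun i => f i = j)).card)} with hG
  set Pa := {P : Finset (Finset (Fin (t + t))) |
      (∀ p ∈ P, p.card = 2) ∧
      (P : Set (Finset (Fin (t + t)))).PairwiseDisjoint id ∧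
      P.sup id = Finset.univ} with hPa
  have hGfin : G.Finite := Set.toFinite _
  have hPfin : Pa.Finite := Set.toFinite _
  rw [Set.ncard_eq_toFinset_card G hGfin, Set.ncard_eq_toFinset_card Pa hPfin]
  set s := hGfin.toFinset with hs
  set pf := hPfin.toFinset with hpf
  -- image of Pf lies in pf
  have himage : s.image Pf ⊆ pf := by
    intro P hP
    rw [Finset.mem_image] at hP
    obtain ⟨f, hfs, rfl⟩ := hP
    rw [hpf, Set.Finite.mem_toFinset]
    exact ⟨Pf_card2 f, Pf_disj f, Pf_sup f⟩
  have hfiber : ∀ P ∈ s.image Pf, (s.filter (fun f => Pf f = P)).card ≤ k ^ t := by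
    intro P hP
    rw [Finset.mem_image] at hP
    obtain ⟨f₀, hf₀, hPf₀⟩ := hP
    have hne : ∀ p ∈ P, p.Nonempty := by
      intro p hp
      rw [← hPf₀] at hp
      have := Pf_card2 f₀ p hp
      rw [← Finset.card_pos, this]; omega
    have hcard : P.card ≤ t := by
      rw [← hPf₀, Pf]
      calc (Finset.image _ Finset.univ).card ≤ (Finset.univ : Finset (Fin t)).card :=
            Finset.card_image_le
        _ = t := by simp
    calc (s.filter (fun f => Pf f = P)).card
        ≤ (Finset.univ : Finset ({p // p ∈ P} → Fin k)).card := by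
          apply Finset.card_le_card_of_injOn
            (fun f (p : {p // p ∈ P}) => f (p.1.min' (hne p.1 p.2)))
          · intro _ _; exact Finset.mem_univ _
          · intro f hf f' hf' hEq
            simp only [Finset.coe_filter, Set.mem_setOf_eq, Finset.mem_filter] at hf hf'
            obtain ⟨hfs, hfP⟩ := hf
            obtain ⟨hfs', hfP'⟩ := hf'
            rw [hs, Set.Finite.mem_toFinset, hG, Set.mem_setOf_eq] at hfs hfs'
            funext i
            have hi : i ∈ P.sup id := by
              rw [← hfP, Pf_sup f]; exact Finset.mem_univ _
            rw [Finset.mem_sup] at hi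
            obtain ⟨p, hp, hip⟩ := hi
            simp only [id_eq] at hip
            have hmin : p.min' (hne p hp) ∈ p := Finset.min'_mem _ _
            have h1 : f i = f (p.min' (hne p hp)) := by
              have := Pf_const hfs p (by rw [hfP]; exact hp) i hip _ hmin
              exact this
            have h2 : f' i = f' (p.min' (hne p hp)) := by
              have := Pf_const hfs' p (by rw [hfP']; exact hp) i hip _ hmin
              exact this
            have h3 := congrFun hEq ⟨p, hp⟩
            simp only at h3
            rw [h1, h2, h3]
      _ = k ^ P.card := by
          rw [Finset.card_univ, Fintype.card_fun, Fintype.card_fin, Fintype.card_coe]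
      _ ≤ k ^ t := Nat.pow_le_pow_right hk hcard |>.trans_eq rfl |>.trans
          (Nat.pow_le_pow_right hk le_rfl)
  calc s.card ≤ k ^ t * (s.image Pf).card :=
        Finset.card_le_mul_card_image s (k ^ t) hfiber
    _ ≤ k ^ t * pf.card := by
        exact Nat.mul_le_mul_left _ (Finset.card_le_card himage)
    _ = pf.card * k ^ t := Nat.mul_comm _ _

private lemma parts_card {n : ℕ} {P : Finset (Finset (Fin n))}
    (h2 : ∀ p ∈ P, p.card = 2)
    (hd : (P : Set (Finset (Fin n))).PairwiseDisjoint id)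
    (hs : P.sup id = Finset.univ) : 2 * P.card = n := by
  have h := congrArg Finset.card hs
  rw [Finset.sup_eq_biUnion, Finset.card_biUnion
    (fun x hx y hy hxy => hd (Finset.mem_coe.mpr hx) (Finset.mem_coe.mpr hy) hxy)] at h
  rw [Finset.card_univ, Fintype.card_fin] at h
  have h3 : ∑ u ∈ P, (id u : Finset (Fin n)).card = P.card * 2 :=
    Finset.sum_const_nat (fun p hp => by rw [id_eq]; exact h2 p hp)
  rw [h3] at h
  omega

private lemma parts_bound (t : ℕ) :
    {P : Finset (Finset (Fin (t + t))) |
        (∀ p ∈ P, p.card = 2) ∧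
        (P : Set (Finset (Fin (t + t)))).PairwiseDisjoint id ∧
        P.sup id = Finset.univ}.ncard
      ≤ Nat.choose ((t + t) * ((t + t) - 1) / 2) t := by
  classical
  set Pa := {P : Finset (Finset (Fin (t + t))) |
      (∀ p ∈ P, p.card = 2) ∧
      (P : Set (Finset (Fin (t + t)))).PairwiseDisjoint id ∧
      P.sup id = Finset.univ} with hPa
  have hPfin : Pa.Finite := Set.toFinite _
  rw [Set.ncard_eq_toFinset_card Pa hPfin]
  have hsub : hPfin.toFinset ⊆
      ((Finset.univ : Finset (Fin (t + t))).powersetCard 2).powersetCard t := by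
    intro P hP
    rw [Set.Finite.mem_toFinset, hPa, Set.mem_setOf_eq] at hP
    obtain ⟨h2, hd, hs⟩ := hP
    rw [Finset.mem_powersetCard]
    constructor
    · intro p hp
      rw [Finset.mem_powersetCard]
      exact ⟨Finset.subset_univ _, h2 p hp⟩
    · have := parts_card h2 hd hs
      omega
  calc hPfin.toFinset.card
      ≤ (((Finset.univ : Finset (Fin (t + t))).powersetCard 2).powersetCard t).card :=
        Finset.card_le_card hsub
    _ = Nat.choose ((t + t) * ((t + t) - 1) / 2) t := by
        rw [Finset.card_powersetCard, Finset.card_powersetCard, Finset.card_univ,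
          Fintype.card_fin, Nat.choose_two_right]

/-- `n` sign-change points (`n` even) land i.i.d. uniformly in `k ≥ 1` bins. The
probability that every bin receives an even number of points is at most `P(n)/k^(n/2)`
(`P(n)` = number of pair partitions of an `n`-set), hence at most
`C(n(n-1)/2, n/2)/√(k^n)`, and (for `n ≠ 0`) tends to `0` as `k → ∞`. -/
theorem stmt16 (n : ℕ) (hn : Even n)
    (Ppairs : ℕ)
    (hP : Ppairs = Set.ncard {P : Finset (Finset (Fin n)) |
        (∀ p ∈ P, p.card = 2) ∧
        (P : Set (Finset (Fin n))).PairwiseDisjoint id ∧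
        P.sup id = Finset.univ})
    (prob : ℕ → ℝ)
    (hprob : ∀ k : ℕ,
      prob k = (Set.ncard {f : Fin n → Fin k |
          ∀ j : Fin k, Even ((Finset.univ.filter (fun i => f i = j)).card)} : ℝ) /
        (k : ℝ) ^ n) :
    (∀ k : ℕ, 1 ≤ k → prob k ≤ (Ppairs : ℝ) / (k : ℝ) ^ (n / 2)) ∧
    (∀ k : ℕ, 1 ≤ k →
      prob k ≤ (Nat.choose (n * (n - 1) / 2) (n / 2) : ℝ) / Real.sqrt ((k : ℝ) ^ n)) ∧
    (n ≠ 0 → Tendsto prob atTop (nhds 0)) := by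
  obtain ⟨t, rfl⟩ := hn
  have h2t : (t + t) / 2 = t := by omega
  have main : ∀ k : ℕ, 1 ≤ k → prob k ≤ (Ppairs : ℝ) / (k : ℝ) ^ t := by
    intro k hk
    have hkey := key_count t k hk
    rw [← hP] at hkey
    have hkpos : (0 : ℝ) < (k : ℝ) := by exact_mod_cast hk
    have hktpos : (0 : ℝ) < (k : ℝ) ^ t := pow_pos hkpos t
    rw [hprob k]
    rw [div_le_div_iff₀ (pow_pos hkpos _) hktpos]
    have hcast : ((Set.ncard {f : Fin (t + t) → Fin k |
        ∀ j : Fin k, Even ((Finset.univ.filter (fun i => f i = j)).card)}) : ℝ)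
        ≤ (Ppairs : ℝ) * (k : ℝ) ^ t := by
      exact_mod_cast hkey
    calc ((Set.ncard {f : Fin (t + t) → Fin k |
          ∀ j : Fin k, Even ((Finset.univ.filter (fun i => f i = j)).card)}) : ℝ)
          * (k : ℝ) ^ t
        ≤ ((Ppairs : ℝ) * (k : ℝ) ^ t) * (k : ℝ) ^ t := by
          exact mul_le_mul_of_nonneg_right hcast (le_of_lt hktpos)
      _ = (Ppairs : ℝ) * (k : ℝ) ^ (t + t) := by rw [pow_add]; ring
  refine ⟨?_, ?_, ?_⟩
  · intro k hk
    rw [h2t]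
    exact main k hk
  · intro k hk
    have hkpos : (0 : ℝ) < (k : ℝ) := by exact_mod_cast hk
    have hktpos : (0 : ℝ) < (k : ℝ) ^ t := pow_pos hkpos t
    have hsq : Real.sqrt ((k : ℝ) ^ (t + t)) = (k : ℝ) ^ t := by
      rw [pow_add, ← sq]
      exact Real.sqrt_sq (le_of_lt hktpos)
    rw [h2t, hsq]
    refine le_trans (main k hk) ?_
    have hPC : (Ppairs : ℝ) ≤ (Nat.choose ((t + t) * ((t + t) - 1) / 2) t : ℝ) := by
      exact_mod_cast hP ▸ parts_bound t
    gcongr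
  · intro hn0
    have ht0 : t ≠ 0 := by omega
    apply squeeze_zero' (g := fun k : ℕ => (Ppairs : ℝ) / (k : ℝ) ^ t)
    · filter_upwards [eventually_ge_atTop 1] with k hk
      rw [hprob k]
      positivity
    · filter_upwards [eventually_ge_atTop 1] with k hk
      exact main k hk
    · apply Filter.Tendsto.div_atTop tendsto_const_nhds
      exact (tendsto_pow_atTop ht0).comp tendsto_natCast_atTop_atTop
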